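/- If A ⊆ V(T_n) contains every vertex on the diagonal {v : v1+v2 = n}, then |N(A)| ≥ |N(D)|, where D is the final segment of the simplicial ordering of size |A|. -/

import Mathlib

/-- Vertex set of the triangular grid graph `T_n`. -/
def TnV (n : ℕ) : Finset (ℕ × ℕ) :=
  (Finset.range (n+1) ×ˢ Finset.range (n+1)).filter (fun v => v.1 + v.2 ≤ n)

/-- Adjacency in the triangular grid graph. -/
def adj (u v : ℕ × ℕ) : Prop :=
  (v.1 = u.1 + 1 ∧ v.2 = u.2) ∨ (u.1 = v.1 + 1 ∧ u.2 = v.2) ∨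
  (v.2 = u.2 + 1 ∧ v.1 = u.1) ∨ (u.2 = v.2 + 1 ∧ u.1 = v.1) ∨
  (v.1 = u.1 + 1 ∧ u.2 = v.2 + 1) ∨ (u.1 = v.1 + 1 ∧ v.2 = u.2 + 1)

instance : ∀ u v : ℕ × ℕ, Decidable (adj u v) := fun u v => by
  unfold adj; infer_instance

/-- The (exterior) vertex boundary of `A` in `T_n`. -/
def boundary (n : ℕ) (A : Finset (ℕ × ℕ)) : Finset (ℕ × ℕ) :=
  (TnV n).filter (fun v => v ∉ A ∧ ∃ u ∈ A, adj u v)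

/-- The neighborhood `N(A)` of `A` in `T_n`. -/
def nbhd (n : ℕ) (A : Finset (ℕ × ℕ)) : Finset (ℕ × ℕ) :=
  (TnV n).filter (fun v => v ∈ A ∨ ∃ u ∈ A, adj u v)

/-- `sle u v` : `u` comes before (or equals) `v` in the simplicial ordering. -/
def sle (u v : ℕ × ℕ) : Prop :=
  u.1 + u.2 < v.1 + v.2 ∨ (u.1 + u.2 = v.1 + v.2 ∧ v.1 ≤ u.1)

/-- `C` is an initial segment of the simplicial ordering on `V(T_n)`. -/
def IsInitSeg (n : ℕ) (C : Finset (ℕ × ℕ)) : Prop :=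
  C ⊆ TnV n ∧ ∀ v ∈ C, ∀ u ∈ TnV n, sle u v → u ∈ C

/-- `D` is a final segment of the simplicial ordering on `V(T_n)`. -/
def IsFinalSeg (n : ℕ) (D : Finset (ℕ × ℕ)) : Prop :=
  D ⊆ TnV n ∧ ∀ v ∈ D, ∀ u ∈ TnV n, sle v u → u ∈ D

lemma mem_TnV {n : ℕ} {v : ℕ × ℕ} : v ∈ TnV n ↔ v.1 + v.2 ≤ n := by
  unfold TnV
  simp only [Finset.mem_filter, Finset.mem_product, Finset.mem_range]
  omega

/-- the fiber of `S` over row-sum `i` -/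
def fib (S : Finset (ℕ × ℕ)) (i : ℕ) : Finset (ℕ × ℕ) :=
  S.filter (fun v => v.1 + v.2 = i)

lemma card_fiberwise {n : ℕ} {S : Finset (ℕ × ℕ)} (hS : S ⊆ TnV n) :
    S.card = ∑ i ∈ Finset.range (n+1), (fib S i).card := by
  have := Finset.card_eq_sum_card_fiberwise
    (f := fun v : ℕ × ℕ => v.1 + v.2) (s := S) (t := Finset.range (n+1))
    (fun x hx => Finset.mem_range.mpr (Nat.lt_succ_of_le (mem_TnV.mp (hS hx))))
  exact this

lemma fib_TnV_eq (n i : ℕ) (hi : i ≤ n) :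
    fib (TnV n) i = (Finset.range (i+1)).image (fun x => (x, i - x)) := by
  ext v
  simp only [fib, Finset.mem_filter, mem_TnV, Finset.mem_image, Finset.mem_range]
  constructor
  · rintro ⟨h1, h2⟩
    exact ⟨v.1, by omega, by rw [Prod.ext_iff]; constructor <;> simp <;> omega⟩
  · rintro ⟨x, hx, rfl⟩
    simp; omega

lemma card_fib_TnV (n i : ℕ) (hi : i ≤ n) : (fib (TnV n) i).card = i + 1 := by
  rw [fib_TnV_eq n i hi, Finset.card_image_of_injOn, Finset.card_range]
  intro x _ y _ h
  exact (Prod.ext_iff.mp h).1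

lemma card_fib_le (n i : ℕ) {S : Finset (ℕ × ℕ)} (hS : S ⊆ TnV n) (hi : i ≤ n) :
    (fib S i).card ≤ i + 1 := by
  rw [← card_fib_TnV n i hi]
  exact Finset.card_le_card (fun v hv => by
    simp only [fib, Finset.mem_filter] at hv ⊢
    exact ⟨hS hv.1, hv.2⟩)

lemma adj_sum {u v : ℕ × ℕ} (h : adj u v) :
    v.1 + v.2 = u.1 + u.2 ∨ v.1 + v.2 = u.1 + u.2 + 1 ∨ u.1 + u.2 = v.1 + v.2 + 1 := by
  unfold adj at h
  omega

lemma subset_nbhd {n : ℕ} {A : Finset (ℕ × ℕ)} (hA : A ⊆ TnV n) : A ⊆ nbhd n A := by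
  intro v hv
  exact Finset.mem_filter.mpr ⟨hA hv, Or.inl hv⟩

lemma nbhd_subset {n : ℕ} (A : Finset (ℕ × ℕ)) : nbhd n A ⊆ TnV n :=
  Finset.filter_subset _ _

/-- index set of row `i` of `S` -/
def idx (S : Finset (ℕ × ℕ)) (i : ℕ) : Finset ℕ :=
  (Finset.range (i+1)).filter (fun x => (x, i - x) ∈ S)

lemma fib_eq_image_idx {n : ℕ} {S : Finset (ℕ × ℕ)} (hS : S ⊆ TnV n) (i : ℕ) :
    fib S i = (idx S i).image (fun x => (x, i - x)) := by
  ext v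
  simp only [fib, idx, Finset.mem_filter, Finset.mem_image, Finset.mem_range]
  constructor
  · rintro ⟨h1, h2⟩
    refine ⟨v.1, ⟨by omega, ?_⟩, ?_⟩
    · have : (v.1, i - v.1) = v := by
        rw [Prod.ext_iff]; constructor
        · rfl
        · simp; omega
      rw [this]; exact h1
    · rw [Prod.ext_iff]; constructor
      · rfl
      · simp; omega
  · rintro ⟨x, ⟨hx, hmem⟩, rfl⟩
    exact ⟨hmem, by simp; omega⟩

lemma card_fib_eq_card_idx {n : ℕ} {S : Finset (ℕ × ℕ)} (hS : S ⊆ TnV n) (i : ℕ) :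
    (fib S i).card = (idx S i).card := by
  rw [fib_eq_image_idx hS i]
  apply Finset.card_image_of_injOn
  intro x _ y _ h
  exact (Prod.ext_iff.mp h).1

lemma mem_idx {S : Finset (ℕ × ℕ)} {i x : ℕ} :
    x ∈ idx S i ↔ x ≤ i ∧ (x, i - x) ∈ S := by
  simp only [idx, Finset.mem_filter, Finset.mem_range, Nat.lt_succ_iff]

/-- path-boundary within a row -/
lemma row_gain {n : ℕ} {A : Finset (ℕ × ℕ)} (hA : A ⊆ TnV n) {i : ℕ} (hi : i ≤ n)
    (hpos : 0 < (fib A i).card) :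
    min (i+1) ((fib A i).card + 1) ≤ (fib (nbhd n A) i).card := by
  rcases le_or_gt (i+1) ((fib A i).card) with hfull | hpart
  · -- row full
    calc min (i+1) ((fib A i).card + 1) ≤ i + 1 := min_le_left _ _
    _ ≤ (fib A i).card := hfull
    _ ≤ (fib (nbhd n A) i).card := Finset.card_le_card (by
        intro v hv
        simp only [fib, Finset.mem_filter] at hv ⊢
        exact ⟨subset_nbhd hA hv.1, hv.2⟩)
  · -- partial row: find an extra vertex
    rw [card_fib_eq_card_idx hA i] at hpos hpart ⊢
    rw [card_fib_eq_card_idx (nbhd_subset A) i]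
    set S := idx A i with hSdef
    have hSsub : S ⊆ idx (nbhd n A) i := by
      intro x hx
      rw [mem_idx] at hx ⊢
      exact ⟨hx.1, subset_nbhd hA hx.2⟩
    have hSne : S.Nonempty := Finset.card_pos.mp hpos
    -- find w adjacent to S, outside S
    have key : ∃ w, w ∉ S ∧ w ∈ idx (nbhd n A) i := by
      set m := S.min' hSne with hm
      have hmS : m ∈ S := S.min'_mem hSne
      have hmi : m ≤ i := (mem_idx.mp hmS).1
      have hmA : (m, i - m) ∈ A := (mem_idx.mp hmS).2
      rcases Nat.eq_zero_or_pos m with hm0 | hmpos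
      · -- 0 ∈ S; take least missing g
        have hSc : ((Finset.range (i+1)) \ S).Nonempty := by
          rw [← Finset.card_pos]
          have hsub : S ⊆ Finset.range (i+1) := Finset.filter_subset _ _
          rw [Finset.card_sdiff_of_subset hsub, Finset.card_range]
          omega
        set g := ((Finset.range (i+1)) \ S).min' hSc with hg
        have hgmem : g ∈ Finset.range (i+1) \ S := by rw [hg]; exact Finset.min'_mem _ hSc
        rw [Finset.mem_sdiff, Finset.mem_range] at hgmem
        have hgpos : 0 < g := by
          rcases Nat.eq_zero_or_pos g with h0 | h
          · exfalso; apply hgmem.2; rw [h0, ← hm0]; exact hmS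
          · exact h
        have hg1S : g - 1 ∈ S := by
          by_contra hc
          have h2 : g - 1 ∈ (Finset.range (i+1)) \ S := by
            rw [Finset.mem_sdiff, Finset.mem_range]
            exact ⟨by omega, hc⟩
          have h3 := Finset.min'_le _ _ h2
          rw [← hg] at h3
          omega
        refine ⟨g, hgmem.2, ?_⟩
        rw [mem_idx]
        refine ⟨by omega, ?_⟩
        rw [nbhd, Finset.mem_filter]
        constructor
        · rw [mem_TnV]; simp; omega
        · right
          refine ⟨(g-1, i - (g-1)), (mem_idx.mp hg1S).2, ?_⟩
          unfold adj
          dsimp only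
          omega
      · -- m ≥ 1 : take m - 1
        refine ⟨m - 1, ?_, ?_⟩
        · intro hc
          have := S.min'_le _ hc
          omega
        · rw [mem_idx]
          refine ⟨by omega, ?_⟩
          rw [nbhd, Finset.mem_filter]
          constructor
          · rw [mem_TnV]; simp; omega
          · right
            refine ⟨(m, i - m), hmA, ?_⟩
            unfold adj
            simp only []
            omega
    obtain ⟨w, hwS, hwT⟩ := key
    calc min (i+1) (S.card + 1) ≤ S.card + 1 := min_le_right _ _
    _ = (insert w S).card := (Finset.card_insert_of_notMem hwS).symm
    _ ≤ (idx (nbhd n A) i).card := Finset.card_le_card (by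
        intro x hx
        rcases Finset.mem_insert.mp hx with rfl | hx
        · exact hwT
        · exact hSsub hx)

/-- shadow from row i+1 into row i -/
lemma shadow_gain {n : ℕ} {A : Finset (ℕ × ℕ)} (hA : A ⊆ TnV n) {i : ℕ} (hi : i + 1 ≤ n) :
    min (i+1) ((fib A (i+1)).card) ≤ (fib (nbhd n A) i).card := by
  rw [card_fib_eq_card_idx hA (i+1), card_fib_eq_card_idx (nbhd_subset A) i]
  set S := idx A (i+1) with hSdef
  set T := idx (nbhd n A) i with hTdef
  have rule1 : ∀ x ∈ S, x ≤ i → x ∈ T := by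
    intro x hx hxi
    have hxA : (x, i + 1 - x) ∈ A := (mem_idx.mp hx).2
    rw [hTdef, mem_idx]
    refine ⟨hxi, ?_⟩
    rw [nbhd, Finset.mem_filter]
    refine ⟨mem_TnV.mpr (by simp; omega), Or.inr ⟨(x, i+1-x), hxA, ?_⟩⟩
    unfold adj
    dsimp only
    omega
  have rule2 : ∀ x ∈ S, 1 ≤ x → x - 1 ∈ T := by
    intro x hx hx1
    have hxi : x ≤ i + 1 := (mem_idx.mp hx).1
    have hxA : (x, i + 1 - x) ∈ A := (mem_idx.mp hx).2
    rw [hTdef, mem_idx]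
    refine ⟨by omega, ?_⟩
    rw [nbhd, Finset.mem_filter]
    refine ⟨mem_TnV.mpr (by simp; omega), Or.inr ⟨(x, i+1-x), hxA, ?_⟩⟩
    unfold adj
    dsimp only
    omega
  by_cases hfull : Finset.range (i+2) ⊆ S
  · -- row i+1 full in A : row i full in nbhd
    have : Finset.range (i+1) ⊆ T := by
      intro x hx
      rw [Finset.mem_range] at hx
      exact rule1 x (hfull (Finset.mem_range.mpr (by omega))) (by omega)
    calc min (i+1) S.card ≤ i + 1 := min_le_left _ _
    _ = (Finset.range (i+1)).card := (Finset.card_range _).symm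
    _ ≤ T.card := Finset.card_le_card this
  · obtain ⟨g, hgr, hgS⟩ := Finset.not_subset.mp hfull
    rw [Finset.mem_range] at hgr
    set F1 := S.filter (fun x => x < g) with hF1
    set F2 := (S.filter (fun x => g < x)).image (fun x => x - 1) with hF2
    have hF1T : F1 ⊆ T := by
      intro x hx
      rw [hF1, Finset.mem_filter] at hx
      exact rule1 x hx.1 (by omega)
    have hF2T : F2 ⊆ T := by
      intro y hy
      rw [hF2, Finset.mem_image] at hy
      obtain ⟨x, hx, rfl⟩ := hy
      rw [Finset.mem_filter] at hx
      exact rule2 x hx.1 (by omega)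
    have hdisj : Disjoint F1 F2 := by
      rw [Finset.disjoint_left]
      intro y hy1 hy2
      simp only [hF1, Finset.mem_filter] at hy1
      simp only [hF2, Finset.mem_image, Finset.mem_filter] at hy2
      obtain ⟨x, ⟨_, h2⟩, hxy⟩ := hy2
      have h1 : y < g := hy1.2
      omega
    have hcard2 : F2.card = (S.filter (fun x => g < x)).card := by
      apply Finset.card_image_of_injOn
      intro x hx y hy h
      simp only [Finset.mem_coe, Finset.mem_filter] at hx hy
      have h' : x - 1 = y - 1 := h
      have hgx : g < x := hx.2
      have hgy : g < y := hy.2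
      omega
    have hcards : F1.card + F2.card = S.card := by
      rw [hcard2]
      have := Finset.card_filter_add_card_filter_not (s := S)
        (p := fun x => x < g)
      rw [← this, hF1]
      congr 1
      apply Finset.card_bij (fun x _ => x)
      · intro x hx
        simp only [Finset.mem_filter] at hx ⊢
        have hxg : x ≠ g := fun h => hgS (h ▸ hx.1)
        exact ⟨hx.1, by omega⟩
      · intro x _ y _ h; exact h
      · intro x hx
        simp only [Finset.mem_filter, not_lt] at hx
        refine ⟨x, ?_, rfl⟩
        simp only [Finset.mem_filter]
        have hxg : x ≠ g := fun h => hgS (h ▸ hx.1)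
        exact ⟨hx.1, by omega⟩
    calc min (i+1) S.card ≤ S.card := min_le_right _ _
    _ = (F1 ∪ F2).card := by rw [Finset.card_union_of_disjoint hdisj, hcards]
    _ ≤ T.card := Finset.card_le_card (Finset.union_subset hF1T hF2T)

def beta (a : ℕ → ℕ) (i : ℕ) : ℕ :=
  min (i+1) (max (a (i+1)) (if a i = 0 then 0 else a i + 1))

lemma fib_A_top_empty {n : ℕ} {A : Finset (ℕ × ℕ)} (hA : A ⊆ TnV n) :
    fib A (n+1) = ∅ := by
  rw [Finset.eq_empty_iff_forall_notMem]
  intro v hv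
  rw [fib, Finset.mem_filter] at hv
  have := mem_TnV.mp (hA hv.1)
  omega

lemma b_ge_beta {n : ℕ} {A : Finset (ℕ × ℕ)} (hA : A ⊆ TnV n) {i : ℕ} (hi : i ≤ n) :
    beta (fun j => (fib A j).card) i ≤ (fib (nbhd n A) i).card := by
  unfold beta
  rw [min_max_distrib_left]
  apply max_le
  · -- shadow part
    dsimp only
    rcases lt_or_eq_of_le hi with hlt | rfl
    · exact shadow_gain hA hlt
    · rw [fib_A_top_empty hA]
      simp
  · -- within-row part
    dsimp only
    rcases Nat.eq_zero_or_pos ((fib A i).card) with h0 | hpos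
    · simp [h0]
    · rw [if_neg (Nat.pos_iff_ne_zero.mp hpos)]
      exact row_gain hA hi hpos

lemma a_le_beta (a : ℕ → ℕ) (i : ℕ) (h : a i ≤ i + 1) : a i ≤ beta a i := by
  unfold beta
  rcases Nat.eq_zero_or_pos (a i) with h0 | h0
  · simp [h0]
  · rw [if_neg (Nat.pos_iff_ne_zero.mp h0)]
    exact le_min h (le_max_of_le_right (Nat.le_succ _))

lemma SL2 (a : ℕ → ℕ) : ∀ (j q : ℕ), (∀ i, i ≤ j → a i ≤ i + 1) →
    min ((∑ i ∈ Finset.Ico (j - (q+1)) j, (i+1)) + q)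
        ((∑ i ∈ Finset.range j, a i) + a j)
      ≤ (∑ i ∈ Finset.range j, beta a i) + q := by
  intro j
  induction j with
  | zero => intro q _; simp
  | succ j ih =>
    intro q hle
    have hle' : ∀ i, i ≤ j → a i ≤ i + 1 := fun i hi => hle i (Nat.le_succ_of_le hi)
    have haj1 : a (j+1) ≤ j + 2 := hle (j+1) le_rfl
    set X := max (a (j+1)) (if a j = 0 then 0 else a j + 1) with hX
    have hbj : beta a j = min (j+1) X := rfl
    have haj_le_X : a (j+1) ≤ X := le_max_left _ _
    -- sums
    rw [Finset.sum_range_succ (f := fun i => beta a i)]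
    rcases le_or_gt (j+1) X with hcap | hsmall
    · -- beta a j = j+1
      have hbj' : beta a j = j + 1 := by rw [hbj]; exact min_eq_left hcap
      rcases Nat.eq_zero_or_pos q with hq0 | hq
      · subst hq0
        apply le_trans (min_le_left _ _)
        have h1 : j + 1 - 1 = j := by omega
        rw [h1, Nat.Ico_succ_singleton]
        simp [hbj']
      · obtain ⟨q', rfl⟩ : ∃ q', q = q' + 1 := ⟨q - 1, by omega⟩
        have := ih q' hle'
        -- Ico (j+1 - (q'+2)) (j+1) sum = Ico (j - (q'+1)) j sum + (j+1)
        have hsplit : (∑ i ∈ Finset.Ico (j + 1 - (q'+1+1)) (j+1), (i+1))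
            = (∑ i ∈ Finset.Ico (j - (q'+1)) j, (i+1)) + (j+1) := by
          have h1 : j + 1 - (q'+1+1) = j - (q'+1) := by omega
          rw [h1, Finset.sum_Ico_succ_top (by omega)]
        rw [hsplit, hbj', Finset.sum_range_succ (f := fun i => a i)]
        omega
    · -- beta a j = X ≤ j
      have hbj' : beta a j = X := by rw [hbj]; exact min_eq_right (le_of_lt hsmall)
      have hXj : X ≤ j := by omega
      have hajX : a j ≤ X ∨ a j = 0 := by
        rcases Nat.eq_zero_or_pos (a j) with h0 | h0
        · right; exact h0
        · left
          have : a j + 1 ≤ X := by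
            rw [hX]; rw [if_neg (Nat.pos_iff_ne_zero.mp h0)]; exact le_max_right _ _
          omega
      rcases le_or_gt X q with hXq | hqX
      · -- direct: LHS bounded by mass + a j + a (j+1) ≤ sum a + X + q
        apply le_trans (min_le_right _ _)
        rw [Finset.sum_range_succ (f := fun i => a i)]
        have hmass : (∑ i ∈ Finset.range j, a i) ≤ ∑ i ∈ Finset.range j, beta a i :=
          Finset.sum_le_sum (fun i hi => a_le_beta a i (hle' i (le_of_lt (Finset.mem_range.mp hi))))
        have h2 : a j + a (j+1) ≤ X + q := by
          rcases hajX with h | h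
          · rcases Nat.eq_zero_or_pos (a j) with h0 | h0
            · omega
            · have : a j + 1 ≤ X := by
                rw [hX, if_neg (Nat.pos_iff_ne_zero.mp h0)]; exact le_max_right _ _
              omega
          · omega
        omega
      · -- X ≥ q+1 : use IH with q
        have := ih q hle'
        have hC : (∑ i ∈ Finset.Ico (j + 1 - (q+1)) (j+1), (i+1))
            ≤ (∑ i ∈ Finset.Ico (j - (q+1)) j, (i+1)) + (q+1) := by
          rw [Finset.sum_Ico_succ_top (show j + 1 - (q+1) ≤ j by omega)]
          rcases le_or_gt (q+1) j with hqj | hqj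
          · have hbot : (∑ i ∈ Finset.Ico (j - (q+1)) j, (i+1))
                = (j - (q+1) + 1) + ∑ i ∈ Finset.Ico (j - (q+1) + 1) j, (i+1) := by
              rw [Finset.sum_eq_sum_Ico_succ_bot (by omega)]
            have h1 : j + 1 - (q+1) = j - (q+1) + 1 := by omega
            rw [h1]
            omega
          · have h1 : j + 1 - (q+1) = 0 := by omega
            have h2 : j - (q+1) = 0 := by omega
            rw [h1, h2]
            omega
        rw [Finset.sum_range_succ (f := fun i => a i)]
        rw [hbj']
        omega

lemma SL (a : ℕ → ℕ) (n s : ℕ) (hs : 1 ≤ s) (hsn : s ≤ n)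
    (hle : ∀ i, i ≤ n → a i ≤ i + 1) (htop : a n = n + 1) :
    min (∑ i ∈ Finset.Ico (s-1) (n+1), (i+1))
        ((∑ i ∈ Finset.range (n+1), a i) + s + 1)
      ≤ ∑ i ∈ Finset.range (n+1), beta a i := by
  have h2 := SL2 a n (n - s) hle
  have hbn : beta a n = n + 1 := by
    unfold beta
    rw [htop]
    have : (if n + 1 = 0 then 0 else n + 1 + 1) = n + 2 := by simp
    rw [this]
    omega
  rw [Finset.sum_range_succ (f := fun i => beta a i), Finset.sum_range_succ (f := fun i => a i), hbn, htop]
  have hIco : n - (n - s + 1) = s - 1 := by omega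
  rw [hIco] at h2
  have hsplit : (∑ i ∈ Finset.Ico (s-1) (n+1), (i+1))
      = (∑ i ∈ Finset.Ico (s-1) n, (i+1)) + (n+1) := by
    rw [Finset.sum_Ico_succ_top (by omega)]
  omega

lemma Aside {n s : ℕ} {A : Finset (ℕ × ℕ)} (hA : A ⊆ TnV n)
    (hdiag : ∀ v ∈ TnV n, v.1 + v.2 = n → v ∈ A) (hs1 : 1 ≤ s) (hsn : s ≤ n) :
    min (∑ i ∈ Finset.Ico (s-1) (n+1), (i+1)) (A.card + s + 1) ≤ (nbhd n A).card := by
  set a : ℕ → ℕ := fun j => (fib A j).card with ha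
  have htop : a n = n + 1 := by
    have h1 : fib A n = fib (TnV n) n := by
      apply Finset.Subset.antisymm
      · intro v hv
        rw [fib, Finset.mem_filter] at hv ⊢
        exact ⟨hA hv.1, hv.2⟩
      · intro v hv
        rw [fib, Finset.mem_filter] at hv ⊢
        exact ⟨hdiag v hv.1 hv.2, hv.2⟩
    rw [ha]
    dsimp only
    rw [h1, card_fib_TnV n n le_rfl]
  have hle : ∀ i, i ≤ n → a i ≤ i + 1 := fun i hi => card_fib_le n i hA hi
  have hSL := SL a n s hs1 hsn hle htop
  have hsum_a : ∑ i ∈ Finset.range (n+1), a i = A.card := (card_fiberwise hA).symm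
  have hsum_b : (nbhd n A).card = ∑ i ∈ Finset.range (n+1), (fib (nbhd n A) i).card :=
    card_fiberwise (nbhd_subset A)
  have hbb : ∑ i ∈ Finset.range (n+1), beta a i
      ≤ ∑ i ∈ Finset.range (n+1), (fib (nbhd n A) i).card := by
    apply Finset.sum_le_sum
    intro i hi
    exact b_ge_beta hA (Nat.lt_succ_iff.mp (Finset.mem_range.mp hi))
  rw [hsum_a] at hSL
  omega

lemma card_filter_ge (n t : ℕ) :
    ((TnV n).filter (fun v => t ≤ v.1 + v.2)).card = ∑ i ∈ Finset.Ico t (n+1), (i+1) := by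
  have h1 : ((TnV n).filter (fun v => t ≤ v.1 + v.2)).card
      = ∑ i ∈ Finset.Ico t (n+1),
          (((TnV n).filter (fun v => t ≤ v.1 + v.2)).filter (fun v => v.1 + v.2 = i)).card := by
    apply Finset.card_eq_sum_card_fiberwise (f := fun v : ℕ × ℕ => v.1 + v.2)
    intro v hv
    rw [Finset.mem_coe, Finset.mem_filter] at hv
    rw [Finset.mem_coe, Finset.mem_Ico]
    exact ⟨hv.2, Nat.lt_succ_of_le (mem_TnV.mp hv.1)⟩
  rw [h1]
  apply Finset.sum_congr rfl
  intro i hi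
  rw [Finset.mem_Ico] at hi
  have h2 : ((TnV n).filter (fun v => t ≤ v.1 + v.2)).filter (fun v => v.1 + v.2 = i)
      = fib (TnV n) i := by
    ext v
    rw [fib, Finset.mem_filter, Finset.mem_filter, Finset.mem_filter]
    constructor
    · rintro ⟨⟨h3, _⟩, h5⟩; exact ⟨h3, h5⟩
    · rintro ⟨h3, h4⟩; exact ⟨⟨h3, by omega⟩, h4⟩
  rw [h2, card_fib_TnV n i (by omega)]


theorem nbhd_ge_final_of_diag_full (n : ℕ) (A D : Finset (ℕ × ℕ))
    (hA : A ⊆ TnV n) (hdiag : ∀ v ∈ TnV n, v.1 + v.2 = n → v ∈ A)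
    (hD : IsFinalSeg n D) (hcard : D.card = A.card) :
    (nbhd n D).card ≤ (nbhd n A).card := by
  have hDsub : D ⊆ TnV n := hD.1
  have hAne : A.Nonempty := ⟨(n, 0), hdiag (n, 0) (mem_TnV.mpr (by simp)) (by simp)⟩
  have hDne : D.Nonempty := by
    rw [← Finset.card_pos] at hAne ⊢
    omega
  have hEne : (D.image (fun v => v.1 + v.2)).Nonempty := hDne.image _
  set s := (D.image (fun v => v.1 + v.2)).min' hEne with hs
  obtain ⟨w, hwD, hws⟩ : ∃ w ∈ D, w.1 + w.2 = s := by
    have := Finset.min'_mem _ hEne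
    rw [← hs, Finset.mem_image] at this
    obtain ⟨w, h1, h2⟩ := this
    exact ⟨w, h1, h2⟩
  have hmin : ∀ v ∈ D, s ≤ v.1 + v.2 := by
    intro v hv
    rw [hs]
    exact Finset.min'_le _ _ (Finset.mem_image_of_mem _ hv)
  rcases Nat.eq_zero_or_pos s with hs0 | hs1
  · -- s = 0 : D = TnV n, and then A = TnV n
    have hDall : D = TnV n := by
      apply Finset.Subset.antisymm hDsub
      intro u hu
      apply hD.2 w hwD u hu
      unfold sle
      rw [hws, hs0]
      omega
    have hAall : A = TnV n := by
      apply Finset.eq_of_subset_of_card_le hA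
      rw [← hcard, hDall]
    rw [hDall, hAall]
  · -- s ≥ 1
    have hsn : s ≤ n := by
      have := mem_TnV.mp (hDsub hwD)
      omega
    -- the row-s part of D
    have hFne : (fib D s).Nonempty := ⟨w, by rw [fib, Finset.mem_filter]; exact ⟨hwD, hws⟩⟩
    have hFne' : ((fib D s).image Prod.fst).Nonempty := hFne.image _
    set c := ((fib D s).image Prod.fst).max' hFne' with hc
    obtain ⟨z, hzD, hzs, hzc⟩ : ∃ z, z ∈ D ∧ z.1 + z.2 = s ∧ z.1 = c := by
      have := Finset.max'_mem _ hFne'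
      rw [← hc, Finset.mem_image] at this
      obtain ⟨z, h1, h2⟩ := this
      rw [fib, Finset.mem_filter] at h1
      exact ⟨z, h1.1, h1.2, h2⟩
    have hcmax : ∀ u ∈ D, u.1 + u.2 = s → u.1 ≤ c := by
      intro u hu hus
      rw [hc]
      apply Finset.le_max'
      rw [Finset.mem_image]
      exact ⟨u, by rw [fib, Finset.mem_filter]; exact ⟨hu, hus⟩, rfl⟩
    have hcs : c ≤ s := by omega
    -- D contains all rows above s
    have hhigh : ∀ u ∈ TnV n, s + 1 ≤ u.1 + u.2 → u ∈ D := by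
      intro u hu h
      apply hD.2 w hwD u hu
      unfold sle
      omega
    -- D contains the initial part of row s
    have hlowrow : ∀ u ∈ TnV n, u.1 + u.2 = s → u.1 ≤ c → u ∈ D := by
      intro u hu h1 h2
      apply hD.2 z hzD u hu
      unfold sle
      omega
    -- upper bound |N(D)| ≤ ∑_{i=s-1}^{n} (i+1)
    have hbound1 : (nbhd n D).card ≤ ∑ i ∈ Finset.Ico (s-1) (n+1), (i+1) := by
      rw [← card_filter_ge n (s-1)]
      apply Finset.card_le_card
      intro v hv
      rw [nbhd, Finset.mem_filter] at hv
      rw [Finset.mem_filter]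
      refine ⟨hv.1, ?_⟩
      rcases hv.2 with hvD | ⟨u, huD, hadj⟩
      · have := hmin v hvD; omega
      · have h1 := hmin u huD
        unfold adj at hadj
        omega
    -- upper bound |N(D)| ≤ |D| + s + 1
    have hbound2 : (nbhd n D).card ≤ D.card + s + 1 := by
      set U := (TnV n).filter (fun v => s ≤ v.1 + v.2) with hU
      set Slow := (TnV n).filter (fun v => v.1 + v.2 = s - 1 ∧ v.1 ≤ c) with hSlow
      have hsub : nbhd n D ⊆ U ∪ Slow := by
        intro v hv
        rw [nbhd, Finset.mem_filter] at hv
        rw [Finset.mem_union, hU, hSlow, Finset.mem_filter, Finset.mem_filter]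
        rcases hv.2 with hvD | ⟨u, huD, hadj⟩
        · exact Or.inl ⟨hv.1, hmin v hvD⟩
        · rcases le_or_gt s (v.1 + v.2) with h | h
          · exact Or.inl ⟨hv.1, h⟩
          · right
            have h1 := hmin u huD
            have h2 : u.1 + u.2 = s := by unfold adj at hadj; omega
            have h3 := hcmax u huD h2
            refine ⟨hv.1, ?_, ?_⟩
            · unfold adj at hadj; omega
            · unfold adj at hadj; omega
      have hUcard : U.card = ∑ i ∈ Finset.Ico s (n+1), (i+1) := card_filter_ge n s
      have hSlowcard : Slow.card ≤ c + 1 := by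
        have : Slow.card ≤ (Finset.range (c+1)).card := by
          apply Finset.card_le_card_of_injOn Prod.fst
          · intro v hv
            rw [Finset.mem_coe, hSlow, Finset.mem_filter] at hv
            rw [Finset.mem_coe, Finset.mem_range]
            omega
          · intro v hv u hu h
            rw [Finset.mem_coe, hSlow, Finset.mem_filter] at hv hu
            rw [Prod.ext_iff]
            constructor
            · exact h
            · omega
        rw [Finset.card_range] at this
        exact this
      -- lower bound on |D|
      have hDlower : (∑ i ∈ Finset.Ico (s+1) (n+1), (i+1)) + (c + 1) ≤ D.card := by
        set Dhigh := (TnV n).filter (fun v => s + 1 ≤ v.1 + v.2) with hDhigh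
        set Dlow := (Finset.range (c+1)).image (fun x => (x, s - x)) with hDlow
        have h1 : Dhigh ⊆ D := by
          intro u hu
          rw [hDhigh, Finset.mem_filter] at hu
          exact hhigh u hu.1 hu.2
        have h2 : Dlow ⊆ D := by
          intro u hu
          rw [hDlow, Finset.mem_image] at hu
          obtain ⟨x, hx, rfl⟩ := hu
          rw [Finset.mem_range] at hx
          apply hlowrow
          · rw [mem_TnV]; dsimp only; omega
          · dsimp only; omega
          · dsimp only; omega
        have hdisj : Disjoint Dhigh Dlow := by
          rw [Finset.disjoint_left]
          intro v hv1 hv2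
          rw [hDhigh, Finset.mem_filter] at hv1
          rw [hDlow, Finset.mem_image] at hv2
          obtain ⟨x, hx, rfl⟩ := hv2
          rw [Finset.mem_range] at hx
          dsimp only at hv1
          omega
        have hcard1 : Dhigh.card = ∑ i ∈ Finset.Ico (s+1) (n+1), (i+1) := card_filter_ge n (s+1)
        have hcard2 : Dlow.card = c + 1 := by
          rw [hDlow, Finset.card_image_of_injOn, Finset.card_range]
          intro x _ y _ h
          exact (Prod.ext_iff.mp h).1
        calc (∑ i ∈ Finset.Ico (s+1) (n+1), (i+1)) + (c + 1)
            = (Dhigh ∪ Dlow).card := by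
              rw [Finset.card_union_of_disjoint hdisj, hcard1, hcard2]
        _ ≤ D.card := Finset.card_le_card (Finset.union_subset h1 h2)
      have hsplitU : (∑ i ∈ Finset.Ico s (n+1), (i+1))
          = (s+1) + ∑ i ∈ Finset.Ico (s+1) (n+1), (i+1) := by
        rw [Finset.sum_eq_sum_Ico_succ_bot (by omega : s < n+1)]
      calc (nbhd n D).card ≤ (U ∪ Slow).card := Finset.card_le_card hsub
      _ ≤ U.card + Slow.card := Finset.card_union_le _ _
      _ ≤ D.card + s + 1 := by omega
    -- combine with the A-side bound
    have hAside := Aside hA hdiag hs1 hsn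
    rw [← hcard] at hAside
    rcases le_total (∑ i ∈ Finset.Ico (s-1) (n+1), (i+1)) (D.card + s + 1) with h | h
    · calc (nbhd n D).card ≤ _ := hbound1
      _ ≤ (nbhd n A).card := by rw [min_eq_left h] at hAside; exact hAside
    · calc (nbhd n D).card ≤ _ := hbound2
      _ ≤ (nbhd n A).card := by rw [min_eq_right h] at hAside; exact hAside
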